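/- Let M be a matroid on a finite ground set E of size n with rank function rk and rank r = rk(E), with r ≥ 1, and let m ≥ 2 be an integer. If every cocircuit of M has at least m elements, then T(M;0,2) ≥ ∑_{j=0}^{m−2} C(r−1+j, j)·2^(n−r−j), i.e. ∑_{S ⊆ E} (-1)^{r - rk(S)} ≥ 2^(n−r) + C(r,1)·2^(n−r−1) + ⋯ + C(r+m−3, m−2)·2^(n−r−m+2). -/

import Mathlib

/-- The rank of a set `X` in a matroid `M`: the largest cardinality of an
independent subset of `X`. -/
noncomputable def matroidRk {α : Type*} (M : Matroid α) (X : Set α) : ℕ :=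
  sSup {n : ℕ | ∃ I, M.Indep I ∧ I ⊆ X ∧ I.ncard = n}

/-- An isthmus (coloop) of `M`: an element contained in every basis of `M`. -/
def IsIsthmus {α : Type*} (M : Matroid α) (e : α) : Prop := ∀ B, M.IsBase B → e ∈ B

/-- A loop of `M`: an element contained in no basis of `M`. -/
def IsLoopElem {α : Type*} (M : Matroid α) (e : α) : Prop := ∀ B, M.IsBase B → e ∉ B

/-- A circuit of `M`: a minimal dependent set. -/
def IsCircuit {α : Type*} (M : Matroid α) (C : Set α) : Prop :=
  M.Dep C ∧ ∀ D, D ⊂ C → M.Indep D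

/-- A cocircuit of `M`: a circuit of the dual matroid `M✶`. -/
def IsCocircuit {α : Type*} (M : Matroid α) (C : Set α) : Prop := IsCircuit M✶ C

/-!
Deletion–contraction for `T(M;0,2)`: if `e` is a loop then `T(M) = 2 T(M ＼ e)`, if `e` is a coloop
then `T(M) = 0`, and otherwise `T(M) = T(M ＼ e) + T(M ／ e)`. The bound
`b(n, r, m) = ∑_{j < m-1} multichoose r j · 2^(n-r-j)` obeys the matching recursion
`b(n+1, r+1, m) = b(n, r+1, m-1) + b(n, r, m)` (Pascal's rule for `multichoose`), and the hypothesis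
that all cocircuits have at least `m` elements passes to `M ＼ e` with `m - 1` and to `M ／ e` with `m`.
When `m ≥ 2` there are no coloops, and deleting a loop doubles both sides because
`n - r - m + 2 ≥ 1`. Minors are handled through rank functions on finsets: deletion shrinks the
ground set and contraction by `e` is `S ↦ r(S ∪ {e}) - 1`.
-/

open Finset

/-- For `r ≥ 1`, `multichoose r j = C(r-1+j, j)`; for `r = 0` only the `j = 0` term survives. -/
noncomputable def tutteLowerBound (n r m : ℕ) : ℤ :=
  ∑ j ∈ range (m - 1), (r.multichoose j : ℤ) * 2 ^ (n - r - j)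

lemma tutteLowerBound_of_le_one {m : ℕ} (hm : m ≤ 1) (n r : ℕ) : tutteLowerBound n r m = 0 := by
  simp [tutteLowerBound, Nat.sub_eq_zero_of_le hm]

lemma tutteLowerBound_zero_le (n m : ℕ) : tutteLowerBound n 0 m ≤ 2 ^ n := by
  rcases Nat.lt_or_ge m 2 with hm | hm
  · simp [tutteLowerBound_of_le_one (Nat.le_of_lt_succ hm)]
  · obtain ⟨k, hk⟩ : ∃ k, m - 1 = k + 1 := ⟨m - 2, by omega⟩
    simp [tutteLowerBound, hk, sum_range_succ']

lemma tutteLowerBound_succ_succ (n r m : ℕ) :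
    tutteLowerBound (n + 1) (r + 1) m =
      tutteLowerBound n (r + 1) (m - 1) + tutteLowerBound n r m := by
  rcases Nat.lt_or_ge m 2 with hm | hm
  · simp [tutteLowerBound_of_le_one (Nat.le_of_lt_succ hm),
      tutteLowerBound_of_le_one (show m - 1 ≤ 1 by omega)]
  obtain ⟨k, rfl⟩ : ∃ k, m = k + 2 := ⟨m - 2, by omega⟩
  simp only [tutteLowerBound, Nat.add_sub_cancel, show k + 2 - 1 = k + 1 by omega]
  rw [sum_range_succ', sum_range_succ' (fun j => (r.multichoose j : ℤ) * _)]
  simp only [Nat.multichoose_succ_succ, Nat.multichoose_zero_right, Nat.cast_add, add_mul,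
    sum_add_distrib]
  have e1 : ∀ j, n + 1 - (r + 1) - (j + 1) = n - (r + 1) - j := fun j => by omega
  have e2 : ∀ j, n - r - (j + 1) = n - (r + 1) - j := fun j => by omega
  simp only [e1, e2, show n + 1 - (r + 1) - 0 = n - r - 0 by omega]
  ring

lemma tutteLowerBound_succ_left {n r m : ℕ} (h : r + m ≤ n + 2) :
    tutteLowerBound (n + 1) r m = 2 * tutteLowerBound n r m := by
  rw [tutteLowerBound, tutteLowerBound, mul_sum]
  refine sum_congr rfl fun j hj => ?_
  rw [show n + 1 - r - j = n - r - j + 1 by grind, pow_succ]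
  ring

section RankFunction

variable {α : Type*} [DecidableEq α]

structure IsRankFn (f : Finset α → ℕ) : Prop where
  map_empty : f ∅ = 0
  mono : Monotone f
  insert_le : ∀ S e, f (insert e S) ≤ f S + 1
  submodular : ∀ S T, f (S ∪ T) + f (S ∩ T) ≤ f S + f T

def contractRk (f : Finset α → ℕ) (e : α) (S : Finset α) : ℕ := f (insert e S) - 1

/-- For the rank function of a matroid on `E`, this says that every cocircuit (a minimal set whose
complement does not span) has at least `m` elements. -/
def CogirthAtLeast (f : Finset α → ℕ) (E : Finset α) (m : ℕ) : Prop :=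
  ∀ S ⊆ E, #(E \ S) < m → f S = f E

/-- `T(0,2)` of the restriction to `E` of the matroid with rank function `f`. -/
def tutteZeroTwo (f : Finset α → ℕ) (E : Finset α) : ℤ :=
  ∑ S ∈ E.powerset, (-1) ^ (f E - f S)

omit [DecidableEq α] in
lemma tutteZeroTwo_of_rank_eq_zero {f : Finset α → ℕ} {E : Finset α} (h : f E = 0) :
    tutteZeroTwo f E = 2 ^ #E := by
  have hS : ∀ S ∈ E.powerset, (-1 : ℤ) ^ (f E - f S) = 1 := fun S _ => by
    rw [h, Nat.zero_sub, pow_zero]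
  simp [tutteZeroTwo, sum_congr rfl hS]

namespace IsRankFn

variable {f : Finset α → ℕ} {E : Finset α} {e : α}

lemma le_card (hf : IsRankFn f) (S : Finset α) : f S ≤ #S := by
  induction S using Finset.induction_on with
  | empty => simp [hf.map_empty]
  | insert e S he ih =>
    rw [card_insert_of_notMem he]
    exact (hf.insert_le S e).trans (by omega)

lemma singleton_le (hf : IsRankFn f) (e : α) : f {e} ≤ 1 := by
  simpa [hf.map_empty] using hf.insert_le ∅ e

lemma insert_eq_of_loop (hf : IsRankFn f) (he : f {e} = 0) (S : Finset α) :
    f (insert e S) = f S := by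
  have h := hf.submodular S {e}
  rw [union_singleton, he] at h
  have := hf.mono (subset_insert e S)
  omega

lemma insert_eq_add_one_of_coloop (hf : IsRankFn f) {S : Finset α} (he : e ∉ E) (hS : S ⊆ E)
    (hc : f E < f (insert e E)) : f (insert e S) = f S + 1 := by
  have h := hf.submodular (insert e S) E
  rw [insert_union, union_eq_right.2 hS, insert_inter_of_notMem he, inter_eq_left.2 hS] at h
  have := hf.insert_le S e
  omega

lemma contract (hf : IsRankFn f) (he : f {e} = 1) : IsRankFn (contractRk f e) where
  map_empty := by simp [contractRk, he]
  mono S T hST := by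
    have := hf.mono (insert_subset_insert e hST)
    simp only [contractRk]
    omega
  insert_le S x := by
    have h1 := hf.insert_le (insert e S) x
    have h2 := hf.mono (singleton_subset_iff.2 (mem_insert_self e S))
    simp only [contractRk, Finset.insert_comm x e] at h1 ⊢
    omega
  submodular S T := by
    have h := hf.submodular (insert e S) (insert e T)
    have hpos : ∀ X, 1 ≤ f (insert e X) := fun X =>
      he ▸ hf.mono (singleton_subset_iff.2 (mem_insert_self e X))
    rw [← insert_union_distrib, ← insert_inter_distrib] at h
    have := hpos S; have := hpos T; have := hpos (S ∪ T); have := hpos (S ∩ T)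
    simp only [contractRk]
    omega

lemma tutteZeroTwo_insert_of_loop (hf : IsRankFn f) (he : e ∉ E) (hl : f {e} = 0) :
    tutteZeroTwo f (insert e E) = 2 * tutteZeroTwo f E := by
  simp only [tutteZeroTwo, sum_powerset_insert he, hf.insert_eq_of_loop hl]
  ring

lemma tutteZeroTwo_insert_of_coloop (hf : IsRankFn f) (he : e ∉ E)
    (hc : f E < f (insert e E)) : tutteZeroTwo f (insert e E) = 0 := by
  rw [tutteZeroTwo, sum_powerset_insert he, ← sum_add_distrib]
  refine sum_eq_zero fun S hS => ?_
  have hSE := mem_powerset.1 hS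
  have h1 := hf.insert_eq_add_one_of_coloop he hSE hc
  have h2 := hf.mono (insert_subset_insert e hSE)
  rw [show f (insert e E) - f S = f (insert e E) - f (insert e S) + 1 by omega, pow_succ]
  ring

lemma tutteZeroTwo_insert_eq_add_contract (hf : IsRankFn f) (he : e ∉ E) (hnl : f {e} = 1)
    (hnc : f (insert e E) = f E) :
    tutteZeroTwo f (insert e E) = tutteZeroTwo f E + tutteZeroTwo (contractRk f e) E := by
  rw [tutteZeroTwo, sum_powerset_insert he, hnc]
  congr 1
  refine sum_congr rfl fun S hS => ?_
  have h1 := hnl ▸ hf.mono (singleton_subset_iff.2 (mem_insert_self e S))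
  have h2 := hnc ▸ hf.mono (insert_subset_insert e (mem_powerset.1 hS))
  simp only [contractRk]
  congr 1
  omega

end IsRankFn

namespace CogirthAtLeast

variable {f : Finset α → ℕ} {E : Finset α} {e : α} {m : ℕ}

lemma rank_add_le (h : CogirthAtLeast f E m) (hf : IsRankFn f) (hr : 1 ≤ f E) :
    f E + m ≤ #E + 1 := by
  rcases Nat.eq_zero_or_pos m with rfl | hm
  · have := hf.le_card E
    omega
  obtain ⟨S, hSE, hS⟩ := exists_subset_card_eq (Nat.sub_le #E (m - 1))
  have hspan := h S hSE (by rw [card_sdiff_of_subset hSE, hS]; omega)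
  have := hf.le_card S
  omega

lemma le_one_of_coloop (h : CogirthAtLeast f (insert e E) m) (he : e ∉ E)
    (hc : f E < f (insert e E)) : m ≤ 1 := by
  by_contra! hm
  have := h E (subset_insert e E) (by simp [insert_sdiff_of_notMem _ he]; omega)
  omega

lemma delete_loop (h : CogirthAtLeast f (insert e E) m) (hf : IsRankFn f) (he : e ∉ E)
    (hl : f {e} = 0) : CogirthAtLeast f E m := fun S hS hlt => by
  have := h (insert e S) (insert_subset_insert e hS)
    (by rwa [insert_sdiff_insert, sdiff_insert_of_notMem he])
  rwa [hf.insert_eq_of_loop hl, hf.insert_eq_of_loop hl] at this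

lemma delete (h : CogirthAtLeast f (insert e E) m) (he : e ∉ E)
    (hnc : f (insert e E) = f E) : CogirthAtLeast f E (m - 1) := fun S hS hlt => by
  have heS : e ∉ S := fun h => he (hS h)
  have := h S (hS.trans (subset_insert e E)) (by
    rw [insert_sdiff_of_notMem _ heS, card_insert_of_notMem (fun h => he (mem_sdiff.1 h).1)]
    omega)
  omega

lemma contract (h : CogirthAtLeast f (insert e E) m) (he : e ∉ E) :
    CogirthAtLeast (contractRk f e) E m := fun S hS hlt => by
  have := h (insert e S) (insert_subset_insert e hS)
    (by rwa [insert_sdiff_insert, sdiff_insert_of_notMem he])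
  simp only [contractRk, this]

end CogirthAtLeast

theorem tutteLowerBound_le_tutteZeroTwo {f : Finset α → ℕ} (hf : IsRankFn f) {E : Finset α}
    {m : ℕ} (h : CogirthAtLeast f E m) : tutteLowerBound #E (f E) m ≤ tutteZeroTwo f E := by
  induction E using Finset.induction_on generalizing f m with
  | empty =>
    rw [tutteZeroTwo_of_rank_eq_zero hf.map_empty, hf.map_empty]
    exact tutteLowerBound_zero_le _ _
  | insert e E he ih =>
    rcases Nat.eq_zero_or_pos (f (insert e E)) with hr | hr
    · rw [tutteZeroTwo_of_rank_eq_zero hr, hr]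
      exact tutteLowerBound_zero_le _ _
    rw [card_insert_of_notMem he]
    rcases Nat.eq_zero_or_pos (f {e}) with hl | hpos
    · have hrm := h.rank_add_le hf hr
      rw [card_insert_of_notMem he, hf.insert_eq_of_loop hl] at hrm
      rw [hf.tutteZeroTwo_insert_of_loop he hl, hf.insert_eq_of_loop hl,
        tutteLowerBound_succ_left (by omega)]
      linarith [ih hf (h.delete_loop hf he hl)]
    rcases (hf.mono (subset_insert e E)).lt_or_eq with hc | hnc
    · rw [hf.tutteZeroTwo_insert_of_coloop he hc,
        tutteLowerBound_of_le_one (h.le_one_of_coloop he hc)]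
    have hnl : f {e} = 1 := le_antisymm (hf.singleton_le e) hpos
    obtain ⟨r, hr⟩ : ∃ r, f (insert e E) = r + 1 := ⟨_, (Nat.succ_pred_eq_of_pos hr).symm⟩
    have hdel := ih hf (h.delete he hnc.symm)
    have hcon := ih (hf.contract hnl) (h.contract he)
    rw [hnc, hr] at hdel
    simp only [contractRk, hr, Nat.add_sub_cancel] at hcon
    rw [hf.tutteZeroTwo_insert_eq_add_contract he hnl hnc.symm, hr, tutteLowerBound_succ_succ]
    linarith

end RankFunction

section MatroidRank

variable {α : Type*} (M : Matroid α)

lemma matroidRk_eq_eRk [Finite α] (X : Set α) : (matroidRk M X : ℕ∞) = M.eRk X := by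
  obtain ⟨I, hI⟩ := M.exists_isBasis' X
  have hIfin := Set.toFinite I
  suffices matroidRk M X = I.ncard by rw [this, hI.eRk_eq_encard, hIfin.cast_ncard_eq]
  refine IsGreatest.csSup_eq ⟨⟨I, hI.indep, hI.subset, rfl⟩, ?_⟩
  rintro _ ⟨J, hJ, hJX, rfl⟩
  have := hJ.encard_le_eRk_of_subset hJX
  rw [hI.eRk_eq_encard, ← (Set.toFinite J).cast_ncard_eq, ← hIfin.cast_ncard_eq] at this
  exact_mod_cast this

lemma matroidRk_univ [Finite α] : matroidRk M Set.univ = matroidRk M M.E := by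
  have := matroidRk_eq_eRk M Set.univ
  rw [Matroid.eRk_univ_eq, ← Matroid.eRk_ground, ← matroidRk_eq_eRk] at this
  exact_mod_cast this

lemma isRankFn_matroidRk [Finite α] [DecidableEq α] :
    IsRankFn (fun S : Finset α => matroidRk M S) := by
  refine ⟨?_, fun S T hST => ?_, fun S e => ?_, fun S T => ?_⟩
  · have := matroidRk_eq_eRk M ∅
    rw [Matroid.eRk_empty] at this
    simpa using this
  · have := M.eRk_mono (coe_subset.2 hST)
    simp only [← matroidRk_eq_eRk] at this
    exact_mod_cast this
  · have := M.eRk_insert_le_add_one e S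
    simp only [← matroidRk_eq_eRk] at this
    exact_mod_cast this
  · have := M.eRk_inter_add_eRk_union_le S T
    simp only [← matroidRk_eq_eRk] at this
    rw [add_comm]
    exact_mod_cast this

lemma isCocircuit_iff_isCocircuit {C : Set α} : IsCocircuit M C ↔ M.IsCocircuit C := by
  rw [IsCocircuit, IsCircuit, Matroid.isCocircuit_def, Matroid.isCircuit_iff_forall_ssubset]

lemma cogirthAtLeast_matroidRk [Fintype α] [DecidableEq α] {m : ℕ}
    (hcc : ∀ C : Set α, IsCocircuit M C → m ≤ C.ncard) :
    CogirthAtLeast (fun S : Finset α => matroidRk M S) univ m := by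
  intro S _ hS
  by_contra hne
  have hsp : ¬ M.Spanning (S ∩ M.E) := fun hsp => hne <| by
    have := hsp.eRk_eq
    rw [Matroid.eRk_inter_ground, ← Matroid.eRk_ground, ← matroidRk_eq_eRk, ← matroidRk_eq_eRk,
      ← matroidRk_univ] at this
    simpa using this
  rw [Matroid.spanning_iff_compl_coindep, Set.sdiff_inter_self_eq_sdiff,
    Matroid.coindep_iff_forall_subset_not_isCocircuit] at hsp
  obtain ⟨K, hKS, hK⟩ : ∃ K ⊆ M.E \ S, M.IsCocircuit K := by
    by_contra! hno
    exact hsp ⟨hno, Set.sdiff_subset⟩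
  have h1 := hcc K ((isCocircuit_iff_isCocircuit M).2 hK)
  have h2 : K.ncard ≤ #(univ \ S) := by
    rw [← Set.ncard_coe_finset, coe_sdiff, coe_univ]
    exact Set.ncard_le_ncard (hKS.trans (Set.sdiff_subset_sdiff_left (Set.subset_univ _)))
  omega

end MatroidRank

theorem cocircuit_T02_lower_bound_general {α : Type*} [Fintype α] (M : Matroid α)
    (hr : 1 ≤ matroidRk M M.E) (m : ℕ)
    (hcc : ∀ C : Set α, IsCocircuit M C → m ≤ C.ncard) :
    (∑ j ∈ Finset.range (m - 1),
        ((matroidRk M M.E - 1 + j).choose j : ℤ) *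
          2 ^ (Fintype.card α - matroidRk M M.E - j)) ≤
      ∑ S : Finset α, (-1 : ℤ) ^ (matroidRk M M.E - matroidRk M (S : Set α)) := by
  classical
  have key := tutteLowerBound_le_tutteZeroTwo (isRankFn_matroidRk M)
    (cogirthAtLeast_matroidRk M hcc)
  simp only [tutteLowerBound, tutteZeroTwo, card_univ, powerset_univ, coe_univ, matroidRk_univ]
    at key
  convert key using 4 with j
  rw [Nat.multichoose_eq, Nat.sub_add_comm hr]

/-- If every cocircuit of a rank-`r` matroid `M` (with `r ≥ 1`) on a finite ground set of
size `n` has at least `m ≥ 2` elements, then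
`T(M;0,2) ≥ ∑_{j=0}^{m-2} C(r-1+j, j)·2^(n-r-j)`. -/
theorem cocircuit_T02_lower_bound {α : Type*} [Fintype α] (M : Matroid α)
    (hE : M.E = Set.univ)
    (hr : 1 ≤ matroidRk M M.E) (m : ℕ) (hm : 2 ≤ m)
    (hcc : ∀ C : Set α, IsCocircuit M C → m ≤ C.ncard) :
    (∑ j ∈ Finset.range (m - 1),
        ((matroidRk M M.E - 1 + j).choose j : ℤ) *
          2 ^ (Fintype.card α - matroidRk M M.E - j)) ≤
      ∑ S : Finset α, (-1 : ℤ) ^ (matroidRk M M.E - matroidRk M (S : Set α)) :=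
  cocircuit_T02_lower_bound_general M hr m hcc
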